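/- arXiv:1602.03698 — 8 statements merged into one kernel-verified Lean document; each statement's English description precedes it below -/
import Mathlib

section
/- Let n and k be integers with 1 ≤ k ≤ n/2 and let G be a connected simple graph on n vertices with minimum degree at least k. Then R'(G) ≥ n/2 − (1/2)·(1/k − 1/(n−1))·k·(n−k). -/
open scoped Classical

/-- The variation of the Randić index: `R'(G) = ∑_{uv ∈ E(G)} 1 / max(d(u), d(v))`. -/
noncomputable def Rvar {V : Type*} [Fintype V] (G : SimpleGraph V) : ℝ :=
  ∑ e ∈ G.edgeFinset,
    Sym2.lift ⟨fun u v => (1 : ℝ) / (max (G.degree u) (G.degree v) : ℕ),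
      fun u v => by dsimp only; rw [max_comm]⟩ e

/-
Counting every edge as two darts and telescoping `1/d(u) - 1/d(v)` over the levels `i` between the
two degrees gives `2 R'(G) = n - ∑ᵢ (1/i - 1/(i+1)) Xᵢ`, where `Xᵢ` counts darts from a vertex of
degree `≤ i` to a vertex of degree `> i`. Let `m ≥ k` be the first level with at most `k` vertices
of degree `> m`. For `i ≥ m` the cut bound `Xᵢ ≤ #{d ≤ i} · #{d > i} ≤ k(n-k)` applies. Below `m`,
bounding `Xᵢ` by the degree sum of the low side and resumming gives
`∑_{d(u) < m} (1 - d(u)/m) ≤ (n-k)(1 - k/m)`, using that at least `k` vertices have degree `≥ m`.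
Both pieces telescope to `k(n-k)(1/k - 1/(n-1))`.
-/

open Finset

theorem sum_Ico_one_div_sub_one_div {a b : ℕ} (h : a ≤ b) :
    ∑ i ∈ Ico a b, ((1 : ℝ) / i - 1 / (i + 1)) = 1 / a - 1 / b := by
  convert sum_Ico_sub (fun i : ℕ => -((1 : ℝ) / i)) h using 1
  · push_cast; exact sum_congr rfl fun i _ => by ring
  · ring

theorem one_div_sub_one_div_succ_nonneg {i : ℕ} (hi : 0 < i) : 0 ≤ (1 : ℝ) / i - 1 / (i + 1) :=
  sub_nonneg.2 <| one_div_le_one_div_of_le (by positivity) (by linarith)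

theorem one_div_max_eq_sub_sum_Ico {a b k N : ℕ} (hka : k ≤ a) (hbN : b ≤ N) :
    (1 : ℝ) / (max a b : ℕ) =
      1 / a - ∑ i ∈ Ico k N, if a ≤ i ∧ i < b then (1 : ℝ) / i - 1 / (i + 1) else 0 := by
  rw [← sum_filter, show {i ∈ Ico k N | a ≤ i ∧ i < b} = Ico a b by
    ext; simp only [mem_filter, mem_Ico]; omega]
  rcases le_total a b with hab | hba
  · rw [max_eq_right hab, sum_Ico_one_div_sub_one_div hab]; ring
  · rw [max_eq_left hba, Ico_eq_empty_of_le hba, sum_empty, sub_zero]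

namespace SimpleGraph

variable {V : Type*} [Fintype V] (G : SimpleGraph V) {M : Type*} [AddCommMonoid M]

theorem sum_darts_edge (F : Sym2 V → M) :
    ∑ δ : G.Dart, F δ.edge = 2 • ∑ e ∈ G.edgeFinset, F e := by
  rw [← sum_fiberwise_of_maps_to (g := Dart.edge) (t := G.edgeFinset)
    (fun δ _ => mem_edgeFinset.2 δ.edge_mem), smul_sum]
  refine sum_congr rfl fun e he => ?_
  rw [sum_congr rfl fun δ hδ => congrArg F (mem_filter.1 hδ).2, sum_const,
    G.dart_edge_fiber_card e (mem_edgeFinset.1 he)]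

theorem sum_darts_fst (f : V → M) : ∑ δ : G.Dart, f δ.fst = ∑ v, G.degree v • f v := by
  rw [← sum_fiberwise_of_maps_to (g := fun δ : G.Dart => δ.fst) (t := univ)
    (fun δ _ => mem_univ _)]
  refine sum_congr rfl fun v _ => ?_
  rw [sum_congr rfl fun δ hδ => congrArg f (mem_filter.1 hδ).2, sum_const,
    G.dart_fst_fiber_card_eq_degree v]

noncomputable def crossingDarts (i : ℕ) : Finset G.Dart :=
  {δ | G.degree δ.fst ≤ i ∧ i < G.degree δ.snd}

theorem two_mul_Rvar_eq {k N : ℕ} (hk : 0 < k) (hmin : ∀ v, k ≤ G.degree v)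
    (hmax : ∀ v, G.degree v ≤ N) :
    2 * Rvar G = Fintype.card V -
      ∑ i ∈ Ico k N, ((1 : ℝ) / i - 1 / (i + 1)) * #(G.crossingDarts i) := by
  have hfst : ∑ δ : G.Dart, (1 : ℝ) / G.degree δ.fst = Fintype.card V := by
    rw [sum_darts_fst G fun v => 1 / (G.degree v : ℝ), Fintype.card_eq_sum_ones, Nat.cast_sum]
    refine sum_congr rfl fun v _ => ?_
    have : (G.degree v : ℝ) ≠ 0 := by have := hk.trans_le (hmin v); positivity
    rw [nsmul_eq_mul, mul_one_div_cancel this, Nat.cast_one]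
  have hmax_eq : ∀ δ : G.Dart, (1 : ℝ) / (max (G.degree δ.fst) (G.degree δ.snd) : ℕ) =
      1 / G.degree δ.fst - ∑ i ∈ Ico k N, if G.degree δ.fst ≤ i ∧ i < G.degree δ.snd then
        (1 : ℝ) / i - 1 / (i + 1) else 0 :=
    fun δ => one_div_max_eq_sub_sum_Ico (hmin _) (hmax _)
  calc 2 * Rvar G = ∑ δ : G.Dart, (1 : ℝ) / (max (G.degree δ.fst) (G.degree δ.snd) : ℕ) := by
        rw [Rvar, two_mul, ← two_nsmul, ← sum_darts_edge]; rfl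
    _ = _ := by
        rw [sum_congr rfl fun δ _ => hmax_eq δ, sum_sub_distrib, hfst, sum_comm]
        congr 1
        refine sum_congr rfl fun i _ => ?_
        rw [← sum_filter, sum_const, nsmul_eq_mul, mul_comm, crossingDarts]

theorem card_crossingDarts_le_sum_degree (i : ℕ) :
    #(G.crossingDarts i) ≤ ∑ u with G.degree u ≤ i, G.degree u := by
  calc #(G.crossingDarts i) ≤ #{δ : G.Dart | G.degree δ.fst ≤ i} :=
        card_le_card fun δ hδ => by simp_all [crossingDarts]
    _ = ∑ u with G.degree u ≤ i, G.degree u := by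
        rw [card_filter, sum_darts_fst G fun v => if G.degree v ≤ i then 1 else 0, sum_filter]
        simp

theorem card_crossingDarts_le_mul (i : ℕ) :
    #(G.crossingDarts i) ≤ #{u | G.degree u ≤ i} * #{u | i < G.degree u} := by
  rw [← card_product]
  refine card_le_card_of_injOn (fun δ => δ.toProd) (fun δ hδ => ?_)
    fun δ₁ _ δ₂ _ h => Dart.ext _ _ h
  simpa [crossingDarts] using hδ

end SimpleGraph

section DegreeSequence

variable {V : Type*} [Fintype V] (d : V → ℕ)

theorem card_filter_le_add_card_filter_lt (i : ℕ) :
    #{u | d u ≤ i} + #{u | i < d u} = Fintype.card V := by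
  simpa only [not_le, card_univ] using card_filter_add_card_filter_not (s := univ) fun u => d u ≤ i

theorem sum_Ico_mul_sum_filter_le_eq_sum_filter_lt {k m : ℕ} (hk : 0 < k) (hd : ∀ v, k ≤ d v) :
    ∑ i ∈ Ico k m, ((1 : ℝ) / i - 1 / (i + 1)) * ∑ u with d u ≤ i, (d u : ℝ) =
      ∑ u with d u < m, (1 - (d u : ℝ) / m) := by
  simp_rw [mul_sum, sum_filter]
  rw [sum_comm]
  refine sum_congr rfl fun u _ => ?_
  rw [← sum_filter, ← sum_mul,
    show {i ∈ Ico k m | d u ≤ i} = Ico (d u) m by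
      ext; simp only [mem_filter, mem_Ico]; have := hd u; omega]
  split_ifs with h
  · have : (d u : ℝ) ≠ 0 := by have := hk.trans_le (hd u); positivity
    rw [sum_Ico_one_div_sub_one_div h.le]
    field_simp
  · rw [Ico_eq_empty_of_le (not_lt.1 h), sum_empty, zero_mul]

theorem sum_Ico_mul_le_of_le_sum_degree {n k m : ℕ} (X : ℕ → ℝ) (hk : 0 < k) (hkm : k ≤ m)
    (hd : ∀ v, k ≤ d v) (hX : ∀ i, X i ≤ ∑ u with d u ≤ i, (d u : ℝ))
    (hlow : (#{u | d u < m} : ℝ) ≤ n - k) :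
    ∑ i ∈ Ico k m, ((1 : ℝ) / i - 1 / (i + 1)) * X i ≤ k * (n - k) * (1 / k - 1 / m) := by
  have hm : (0 : ℝ) < m := by exact_mod_cast hk.trans_le hkm
  have hkm' : (k : ℝ) ≤ m := by exact_mod_cast hkm
  calc _ ≤ ∑ i ∈ Ico k m, ((1 : ℝ) / i - 1 / (i + 1)) * ∑ u with d u ≤ i, (d u : ℝ) :=
        sum_le_sum fun i hi => mul_le_mul_of_nonneg_left (hX i)
          (one_div_sub_one_div_succ_nonneg (hk.trans_le (mem_Ico.1 hi).1))
    _ = ∑ u with d u < m, (1 - (d u : ℝ) / m) := sum_Ico_mul_sum_filter_le_eq_sum_filter_lt d hk hd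
    _ ≤ ∑ u with d u < m, (1 - (k : ℝ) / m) :=
        sum_le_sum fun u _ => by gcongr; exact_mod_cast hd u
    _ = #{u | d u < m} * (1 - (k : ℝ) / m) := by rw [sum_const, nsmul_eq_mul]
    _ ≤ (n - k) * (1 - (k : ℝ) / m) :=
        mul_le_mul_of_nonneg_right hlow (by rw [sub_nonneg, div_le_one hm]; exact hkm')
    _ = k * (n - k) * (1 / k - 1 / m) := by field_simp

theorem sum_Ico_mul_le_of_le_card_mul_card {n k m N : ℕ} (X : ℕ → ℝ) (hm : 0 < m) (hmN : m ≤ N)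
    (hkn : 2 * k ≤ n) (hcard : Fintype.card V = n)
    (hX : ∀ i, X i ≤ #{u | d u ≤ i} * #{u | i < d u}) (hhigh : #{u | m < d u} ≤ k) :
    ∑ i ∈ Ico m N, ((1 : ℝ) / i - 1 / (i + 1)) * X i ≤ k * (n - k) * (1 / m - 1 / N) := by
  have hXi : ∀ i, m ≤ i → X i ≤ k * (n - k) := fun i hi => by
    have hb : #{u | i < d u} ≤ k :=
      (card_le_card fun u hu => by
        simp only [mem_filter, mem_univ, true_and] at hu ⊢; omega).trans hhigh
    have hab := card_filter_le_add_card_filter_lt d i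
    rw [hcard] at hab
    have hb' : (#{u | i < d u} : ℝ) ≤ k := by exact_mod_cast hb
    have hab' : (#{u | d u ≤ i} : ℝ) + #{u | i < d u} = n := by exact_mod_cast hab
    have hkn' : 2 * (k : ℝ) ≤ n := by exact_mod_cast hkn
    nlinarith [hX i]
  calc _ ≤ ∑ i ∈ Ico m N, ((1 : ℝ) / i - 1 / (i + 1)) * (k * (n - k)) :=
        sum_le_sum fun i hi => mul_le_mul_of_nonneg_left (hXi i (mem_Ico.1 hi).1)
          (one_div_sub_one_div_succ_nonneg (hm.trans_le (mem_Ico.1 hi).1))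
    _ = _ := by rw [← sum_mul, sum_Ico_one_div_sub_one_div hmN]; ring

theorem sum_Ico_mul_le {n k : ℕ} (X : ℕ → ℝ) (hk : 0 < k) (hkn : 2 * k ≤ n)
    (hcard : Fintype.card V = n) (hd : ∀ v, k ≤ d v) (hdn : ∀ v, d v < n)
    (hX_deg : ∀ i, X i ≤ ∑ u with d u ≤ i, (d u : ℝ))
    (hX_cut : ∀ i, X i ≤ #{u | d u ≤ i} * #{u | i < d u}) :
    ∑ i ∈ Ico k (n - 1), ((1 : ℝ) / i - 1 / (i + 1)) * X i ≤
      k * (n - k) * (1 / k - 1 / (n - 1 : ℝ)) := by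
  have htop : #{u | n - 1 < d u} ≤ k := by
    rw [filter_false_of_mem fun u _ => by have := hdn u; omega, card_empty]; exact Nat.zero_le k
  have hex : ∃ m, k ≤ m ∧ #{u | m < d u} ≤ k := ⟨n - 1, by omega, htop⟩
  obtain ⟨hkm, hhigh⟩ := Nat.find_spec hex
  set m := Nat.find hex
  have hmn : m ≤ n - 1 := Nat.find_min' hex ⟨by omega, htop⟩
  have hlow : (#{u | d u < m} : ℝ) ≤ n - k := by
    have hk_le : k ≤ #{u | m - 1 < d u} := by
      rcases hkm.eq_or_lt with hkm' | hkm'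
      · rw [← hkm', filter_true_of_mem fun u _ => by have := hd u; omega, card_univ, hcard]
        omega
      · exact (not_le.1 fun h => Nat.find_min hex (by omega : m - 1 < m) ⟨by omega, h⟩).le
    have hsum : #{u | d u < m} + #{u | m - 1 < d u} = n := by
      rw [← hcard, ← card_filter_le_add_card_filter_lt d (m - 1)]
      congr 2; ext u; simp only [mem_filter, mem_univ, true_and]; omega
    have : (#{u | d u < m} : ℝ) + k ≤ n := by exact_mod_cast (by omega : #{u | d u < m} + k ≤ n)
    linarith
  have hn : ((n - 1 : ℕ) : ℝ) = n - 1 := by rw [Nat.cast_sub (by omega), Nat.cast_one]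
  rw [← sum_Ico_consecutive _ hkm hmn]
  have h_lo := sum_Ico_mul_le_of_le_sum_degree d X hk hkm hd hX_deg hlow
  have h_hi := sum_Ico_mul_le_of_le_card_mul_card d X (hk.trans_le hkm) hmn hkn hcard hX_cut hhigh
  rw [hn] at h_hi
  linarith

end DegreeSequence

theorem stmt_0_general {n k : ℕ} (hk : 1 ≤ k) (hkn : 2 * k ≤ n)
    {V : Type*} [Fintype V] (G : SimpleGraph V)
    (hcard : Fintype.card V = n)
    (hmin : ∀ v : V, k ≤ G.degree v) :
    (n : ℝ) / 2 - (1 / 2) * (1 / k - 1 / ((n : ℝ) - 1)) * k * (n - k) ≤ Rvar G := by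
  have hdn : ∀ v, G.degree v < n := fun v => hcard ▸ G.degree_lt_card_verts v
  have h2R := G.two_mul_Rvar_eq (N := n - 1) hk hmin fun v => Nat.le_sub_one_of_lt (hdn v)
  have hS := sum_Ico_mul_le (fun v => G.degree v) (fun i => #(G.crossingDarts i))
    hk hkn hcard hmin hdn
    (fun i => by exact_mod_cast G.card_crossingDarts_le_sum_degree i)
    (fun i => by exact_mod_cast G.card_crossingDarts_le_mul i)
  rw [hcard] at h2R
  linarith

theorem stmt_0 {n k : ℕ} (hk : 1 ≤ k) (hkn : 2 * k ≤ n)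
    {V : Type*} [Fintype V] (G : SimpleGraph V)
    (hcard : Fintype.card V = n) (hconn : G.Connected)
    (hmin : ∀ v : V, k ≤ G.degree v) :
    (n : ℝ) / 2 - (1 / 2) * (1 / k - 1 / ((n : ℝ) - 1)) * k * (n - k) ≤ Rvar G :=
  stmt_0_general hk hkn G hcard hmin
end

section
/- Let n and k be integers with n/2 ≤ k ≤ n−2 and let G be a connected simple graph on n vertices with minimum degree at least k. Then R'(G) ≥ n/2 − (n²/8)·(1/k − 1/(n−1)). -/
/-!
Over the darts (oriented edges) `(u, v)` of `G`, `2 R'(G) = ∑ 1 / max(d u, d v)` while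
`∑ 1 / d u = n`, so `n - 2 R'(G) = ∑ (1 / d u - 1 / max(d u, d v))`. Each summand telescopes
as `∑_{d u ≤ t < d v} (1 / t - 1 / (t + 1))`; after exchanging the sums, the coefficient of
`1 / t - 1 / (t + 1)` counts darts from `{d ≤ t}` to `{d > t}`, at most `n² / 4`, and
`t` ranges over `[k, n - 1)`.
-/

open scoped Classical

open Finset

lemma one_div_sub_one_div_max_eq_sum_Ico (a b : ℕ) :
    (1 : ℝ) / a - 1 / (max a b : ℕ) = ∑ t ∈ Ico a b, ((1 : ℝ) / t - 1 / (t + 1 : ℕ)) := by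
  rcases le_total a b with hab | hba
  · rw [max_eq_right hab, ← neg_sub, ← sum_Ico_sub (fun t : ℕ => (1 : ℝ) / t) hab,
      ← sum_neg_distrib]
    simp only [neg_sub]
  · rw [max_eq_left hba, Ico_eq_empty_of_le hba, sum_empty, sub_self]

lemma card_mul_card_compl_le {α : Type*} [Fintype α] (s : Finset α) :
    (#s * #sᶜ : ℝ) ≤ Fintype.card α ^ 2 / 4 := by
  have hsum : (#s + #sᶜ : ℝ) = Fintype.card α := by exact_mod_cast card_add_card_compl s
  rw [← hsum]
  nlinarith [sq_nonneg ((#s : ℝ) - #sᶜ)]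

namespace SimpleGraph

variable {V : Type*} [Fintype V] (G : SimpleGraph V)

theorem sum_dart_edge {M : Type*} [AddCommMonoid M] (g : Sym2 V → M) :
    ∑ d : G.Dart, g d.edge = 2 • ∑ e ∈ G.edgeFinset, g e := by
  rw [← sum_fiberwise_of_maps_to (g := Dart.edge) (t := G.edgeFinset)
    (fun d _ => mem_edgeFinset.2 d.edge_mem), smul_sum]
  refine sum_congr rfl fun e he => ?_
  rw [sum_congr rfl (fun d hd => by rw [(mem_filter.1 hd).2]), sum_const,
    dart_edge_fiber_card _ _ (mem_edgeFinset.1 he)]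

theorem sum_dart_fst {M : Type*} [AddCommMonoid M] (w : V → M) :
    ∑ d : G.Dart, w d.fst = ∑ v, G.degree v • w v := by
  rw [← sum_fiberwise_of_maps_to (g := fun d : G.Dart => d.fst) (t := univ)
    (fun d _ => mem_univ _)]
  refine sum_congr rfl fun v _ => ?_
  rw [sum_congr rfl (fun d hd => by rw [(mem_filter.1 hd).2]), sum_const]
  congr 1
  convert G.dart_fst_fiber_card_eq_degree v

theorem card_dart_fst_mem_snd_notMem_le (s : Finset V) :
    #{d : G.Dart | d.fst ∈ s ∧ d.snd ∉ s} ≤ #s * #sᶜ := by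
  rw [← card_product]
  refine card_le_card_of_injOn Dart.toProd (fun d hd => ?_) fun d _ d' _ => Dart.ext d d'
  simpa [mem_product] using hd

theorem card_dart_degree_cut_le (t : ℕ) :
    (#{d : G.Dart | G.degree d.fst ≤ t ∧ t < G.degree d.snd} : ℝ) ≤ Fintype.card V ^ 2 / 4 := by
  have hcut := G.card_dart_fst_mem_snd_notMem_le {v | G.degree v ≤ t}
  simp only [mem_filter, mem_univ, true_and, not_le] at hcut
  exact (Nat.cast_le.2 hcut).trans (by exact_mod_cast card_mul_card_compl_le _)

theorem two_mul_Rvar :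
    2 * Rvar G = ∑ d : G.Dart, (1 : ℝ) / (max (G.degree d.fst) (G.degree d.snd) : ℕ) := by
  rw [Rvar, two_mul, ← two_nsmul, ← sum_dart_edge]
  rfl

theorem sum_dart_one_div_degree_fst (hdeg : ∀ v, 0 < G.degree v) :
    ∑ d : G.Dart, (1 : ℝ) / G.degree d.fst = Fintype.card V := by
  rw [G.sum_dart_fst fun v => (1 : ℝ) / G.degree v, ← card_univ, card_eq_sum_ones, Nat.cast_sum]
  refine sum_congr rfl fun v _ => ?_
  have : (G.degree v : ℝ) ≠ 0 := by exact_mod_cast (hdeg v).ne'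
  rw [nsmul_eq_mul, mul_one_div_cancel this, Nat.cast_one]

theorem sum_dart_one_div_sub_one_div_max_le {a b : ℕ} (ha : 0 < a) (hab : a ≤ b)
    (hdeg : ∀ v, a ≤ G.degree v ∧ G.degree v ≤ b) :
    ∑ d : G.Dart, ((1 : ℝ) / G.degree d.fst - 1 / (max (G.degree d.fst) (G.degree d.snd) : ℕ))
      ≤ Fintype.card V ^ 2 / 4 * (1 / a - 1 / b) := by
  set f : ℕ → ℝ := fun t => 1 / t - 1 / (t + 1 : ℕ)
  have htelescope : ∀ d : G.Dart,
      (1 : ℝ) / G.degree d.fst - 1 / (max (G.degree d.fst) (G.degree d.snd) : ℕ)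
        = ∑ t ∈ Ico a b, if G.degree d.fst ≤ t ∧ t < G.degree d.snd then f t else 0 := by
    intro d
    rw [one_div_sub_one_div_max_eq_sum_Ico, ← sum_filter]
    congr 1
    ext t
    simp only [mem_filter, mem_Ico]
    have := hdeg d.fst
    have := hdeg d.snd
    omega
  have hf : ∀ t ∈ Ico a b, 0 ≤ f t := fun t ht => by
    have : (0 : ℝ) < t := by exact_mod_cast ha.trans_le (mem_Ico.1 ht).1
    simp only [f, sub_nonneg, Nat.cast_succ]
    gcongr
    linarith
  calc _ = ∑ t ∈ Ico a b, (#{d : G.Dart | G.degree d.fst ≤ t ∧ t < G.degree d.snd} : ℝ) * f t := by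
        rw [sum_congr rfl fun d _ => htelescope d, sum_comm]
        simp only [sum_ite, sum_const_zero, add_zero, sum_const, nsmul_eq_mul]
    _ ≤ ∑ t ∈ Ico a b, Fintype.card V ^ 2 / 4 * f t :=
        sum_le_sum fun t ht => mul_le_mul_of_nonneg_right (G.card_dart_degree_cut_le t) (hf t ht)
    _ = Fintype.card V ^ 2 / 4 * (1 / a - 1 / b) := by
        rw [← mul_sum, ← one_div_sub_one_div_max_eq_sum_Ico, max_eq_right hab]

end SimpleGraph

theorem stmt_3_general {n k : ℕ} (hnk : n ≤ 2 * k) (hkn : k + 2 ≤ n)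
    {V : Type*} [Fintype V] (G : SimpleGraph V)
    (hcard : Fintype.card V = n)
    (hmin : ∀ v : V, k ≤ G.degree v) :
    (n : ℝ) / 2 - (n : ℝ) ^ 2 / 8 * (1 / k - 1 / ((n : ℝ) - 1)) ≤ Rvar G := by
  have hdeg : ∀ v, k ≤ G.degree v ∧ G.degree v ≤ n - 1 := fun v =>
    ⟨hmin v, Nat.le_sub_one_of_lt (hcard ▸ G.degree_lt_card_verts v)⟩
  have hbound := G.sum_dart_one_div_sub_one_div_max_le (by omega) (by omega) hdeg
  rw [sum_sub_distrib, G.sum_dart_one_div_degree_fst fun v => by have := hmin v; omega,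
    ← G.two_mul_Rvar, hcard, Nat.cast_sub (by omega), Nat.cast_one] at hbound
  linarith

theorem stmt_3 {n k : ℕ} (hnk : n ≤ 2 * k) (hkn : k + 2 ≤ n)
    {V : Type*} [Fintype V] (G : SimpleGraph V)
    (hcard : Fintype.card V = n) (hconn : G.Connected)
    (hmin : ∀ v : V, k ≤ G.degree v) :
    (n : ℝ) / 2 - (n : ℝ) ^ 2 / 8 * (1 / k - 1 / ((n : ℝ) - 1)) ≤ Rvar G :=
  stmt_3_general hnk hkn G hcard hmin
end

section
/- Let n and k be integers with n/2 ≤ k ≤ n−2, and suppose that n ≡ 0 (mod 4), or that n ≡ 2 (mod 4) and k is odd. Let G be a simple graph on n vertices whose complement is the disjoint union of an (n−k−1)-regular graph on n/2 vertices and n/2 isolated vertices. Then R'(G) = n/2 − (n²/8)·(1/k − 1/(n−1)). -/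
open scoped Classical

lemma sum_dart_eq_twice (V : Type*) [Fintype V] (G : SimpleGraph V) (f : Sym2 V → ℝ) :
    ∑ d : G.Dart, f d.edge = 2 * ∑ e ∈ G.edgeFinset, f e := by
  rw [← Finset.sum_fiberwise_of_maps_to
    (g := SimpleGraph.Dart.edge) (f := fun d : G.Dart => f d.edge)
    (fun d _ => SimpleGraph.mem_edgeFinset.mpr d.edge_mem), Finset.mul_sum]
  refine Finset.sum_congr rfl fun e he => ?_
  rw [Finset.sum_congr rfl (fun d hd => by
      rw [(Finset.mem_filter.mp hd).2]), Finset.sum_const, nsmul_eq_mul]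
  congr 1
  have := G.dart_edge_fiber_card e (SimpleGraph.mem_edgeFinset.mp he)
  push_cast [this]
  norm_num

lemma sum_dart_eq_nbr (V : Type*) [Fintype V] (G : SimpleGraph V) (g : V → V → ℝ) :
    ∑ d : G.Dart, g d.fst d.snd = ∑ v, ∑ w ∈ G.neighborFinset v, g v w := by
  let e : (Σ v, G.neighborSet v) ≃ G.Dart :=
    { toFun := fun s => ⟨(s.fst, s.snd), s.snd.property⟩
      invFun := fun d => ⟨d.fst, d.snd, d.adj⟩
      left_inv := fun s => by ext <;> simp
      right_inv := fun d => by ext <;> simp }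
  rw [← Equiv.sum_comp e (fun d => g d.fst d.snd)]
  rw [show (Finset.univ : Finset (Σ v, G.neighborSet v)) =
      Finset.univ.sigma (fun _ => Finset.univ) from Finset.univ_sigma_univ.symm,
    Finset.sum_sigma]
  refine Finset.sum_congr rfl fun v _ => ?_
  rw [SimpleGraph.neighborFinset_def,
    ← Finset.sum_coe_sort ((G.neighborSet v).toFinset) (g v)]
  exact Fintype.sum_equiv (Equiv.subtypeEquivRight (by simp)) _ _ (fun s => rfl)

theorem stmt_4 {n k : ℕ} (hnk : n ≤ 2 * k) (hkn : k + 2 ≤ n)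
    (hmod : n % 4 = 0 ∨ (n % 4 = 2 ∧ Odd k))
    {V : Type*} [Fintype V] (G : SimpleGraph V)
    (hcard : Fintype.card V = n)
    -- the complement of `G` is the disjoint union of an `(n-k-1)`-regular graph
    -- on `n/2` vertices (the set `S`) and `n/2` isolated vertices
    (S : Finset V) (hS : 2 * S.card = n)
    (hreg : ∀ v ∈ S, Gᶜ.degree v = n - k - 1)
    (hisol : ∀ v ∉ S, Gᶜ.degree v = 0) :
    Rvar G = (n : ℝ) / 2 - (n : ℝ) ^ 2 / 8 * (1 / k - 1 / ((n : ℝ) - 1)) := by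
  classical
  set p := S.card with hpdef
  have hk2 : 2 ≤ k := by omega
  have hn4 : 4 ≤ n := by omega
  have hpk : p ≤ k := by omega
  have hpn : p ≤ n := by omega
  have hdeglt : ∀ v : V, G.degree v ≤ n - 1 := by
    intro v
    have := G.degree_lt_card_verts v
    omega
  have hdegS : ∀ v ∈ S, G.degree v = k := by
    intro v hv
    have h1 := hreg v hv
    rw [SimpleGraph.degree_compl, hcard] at h1
    have h2 := hdeglt v
    omega
  have hdegN : ∀ v ∉ S, G.degree v = n - 1 := by
    intro v hv
    have h1 := hisol v hv
    rw [SimpleGraph.degree_compl, hcard] at h1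
    have h2 := hdeglt v
    omega
  have hadj : ∀ w, w ∉ S → ∀ u, u ≠ w → G.Adj u w := by
    intro w hw u hne
    by_contra hA
    have hpos : 0 < Gᶜ.degree w := by
      rw [SimpleGraph.degree_pos_iff_exists_adj]
      exact ⟨u, (SimpleGraph.compl_adj G w u).mpr ⟨fun h => hne h.symm, fun h => hA h.symm⟩⟩
    have := hisol w hw
    omega
  have hBset : ∀ v ∈ S, G.neighborFinset v \ S = Finset.univ \ S := by
    intro v hv
    ext w
    simp only [Finset.mem_sdiff, SimpleGraph.mem_neighborFinset, Finset.mem_univ, true_and]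
    constructor
    · rintro ⟨-, h⟩; exact h
    · intro hw
      exact ⟨hadj w hw v (fun h => hw (h ▸ hv)), hw⟩
  have hcardU : Finset.card (Finset.univ \ S) = n - p := by
    rw [Finset.card_sdiff_of_subset (Finset.subset_univ S), Finset.card_univ, hcard]
  have hcardB : ∀ v ∈ S, Finset.card (G.neighborFinset v \ S) = n - p := by
    intro v hv; rw [hBset v hv, hcardU]
  have hcardA : ∀ v ∈ S, Finset.card (G.neighborFinset v ∩ S) = k - p := by
    intro v hv
    have h1 := Finset.card_inter_add_card_sdiff (G.neighborFinset v) S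
    rw [hcardB v hv, SimpleGraph.card_neighborFinset_eq_degree, hdegS v hv] at h1
    omega
  -- turn Rvar into a dart sum
  have key := sum_dart_eq_twice V G (Sym2.lift ⟨fun u v => (1 : ℝ) / (max (G.degree u) (G.degree v) : ℕ),
      fun u v => by dsimp only; rw [max_comm]⟩)
  have key2 : ∑ d : G.Dart, (Sym2.lift ⟨fun u v => (1 : ℝ) / (max (G.degree u) (G.degree v) : ℕ),
      fun u v => by dsimp only; rw [max_comm]⟩ d.edge)
      = ∑ d : G.Dart, (1 : ℝ) / (max (G.degree d.fst) (G.degree d.snd) : ℕ) :=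
    Finset.sum_congr rfl fun d _ => rfl
  rw [key2, sum_dart_eq_nbr V G (fun u v => (1 : ℝ) / (max (G.degree u) (G.degree v) : ℕ))] at key
  have hRv : 2 * Rvar G
      = ∑ v, ∑ w ∈ G.neighborFinset v, (1 : ℝ) / (max (G.degree v) (G.degree w) : ℕ) := by
    rw [Rvar]; exact key.symm
  -- compute the sum
  have houter : ∀ v ∈ Finset.univ \ S,
      (∑ w ∈ G.neighborFinset v, (1 : ℝ) / (max (G.degree v) (G.degree w) : ℕ)) = 1 := by
    intro v hv
    have hv' : v ∉ S := (Finset.mem_sdiff.mp hv).2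
    have hterm : ∀ w ∈ G.neighborFinset v,
        (1 : ℝ) / (max (G.degree v) (G.degree w) : ℕ) = 1 / ((n - 1 : ℕ) : ℝ) := by
      intro w _
      rw [hdegN v hv', max_eq_left (hdeglt w)]
    rw [Finset.sum_congr rfl hterm, Finset.sum_const, SimpleGraph.card_neighborFinset_eq_degree,
      hdegN v hv', nsmul_eq_mul]
    rw [mul_one_div, div_self]
    exact Nat.cast_ne_zero.mpr (by omega)
  have hinner : ∀ v ∈ S,
      (∑ w ∈ G.neighborFinset v, (1 : ℝ) / (max (G.degree v) (G.degree w) : ℕ))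
        = ((k - p : ℕ) : ℝ) / k + ((n - p : ℕ) : ℝ) / ((n - 1 : ℕ) : ℝ) := by
    intro v hv
    rw [← Finset.sum_inter_add_sum_sdiff (G.neighborFinset v) S]
    congr 1
    · have hterm : ∀ w ∈ G.neighborFinset v ∩ S,
          (1 : ℝ) / (max (G.degree v) (G.degree w) : ℕ) = 1 / (k : ℝ) := by
        intro w hw
        rw [hdegS v hv, hdegS w (Finset.mem_inter.mp hw).2, max_self]
      rw [Finset.sum_congr rfl hterm, Finset.sum_const, hcardA v hv, nsmul_eq_mul, mul_one_div]
    · have hterm : ∀ w ∈ G.neighborFinset v \ S,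
          (1 : ℝ) / (max (G.degree v) (G.degree w) : ℕ) = 1 / ((n - 1 : ℕ) : ℝ) := by
        intro w hw
        rw [hdegS v hv, hdegN w (Finset.mem_sdiff.mp hw).2, max_eq_right (by omega)]
      rw [Finset.sum_congr rfl hterm, Finset.sum_const, hcardB v hv, nsmul_eq_mul, mul_one_div]
  rw [← Finset.sum_sdiff (Finset.subset_univ S), Finset.sum_congr rfl houter,
    Finset.sum_congr rfl hinner, Finset.sum_const, Finset.sum_const, hcardU,
    nsmul_eq_mul, nsmul_eq_mul, ← hpdef] at hRv
  -- final algebra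
  have hk0 : (k : ℝ) ≠ 0 := Nat.cast_ne_zero.mpr (by omega)
  have hnp : (n : ℝ) = 2 * p := by exact_mod_cast (congrArg (Nat.cast : ℕ → ℝ) hS).symm
  have hp2 : (2 : ℝ) ≤ p := by
    have : 2 ≤ p := by omega
    exact_mod_cast this
  have hn1 : (n : ℝ) - 1 ≠ 0 := by rw [hnp]; nlinarith
  push_cast [Nat.cast_sub hpk, Nat.cast_sub hpn, Nat.cast_sub (by omega : 1 ≤ n)] at hRv
  have goal2 : ((n : ℝ) / 2 - (n : ℝ) ^ 2 / 8 * (1 / k - 1 / ((n : ℝ) - 1))) * 2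
      = ((n : ℝ) - p) * 1 + (p : ℝ) * (((k : ℝ) - p) / k + ((n : ℝ) - p) / ((n : ℝ) - 1)) := by
    rw [hnp]
    rw [hnp] at hn1
    field_simp
    ring
  linarith [hRv, goal2]
end

section
/- Let n, k, m be integers with 1 ≤ k < m ≤ n−1. For all nonnegative real numbers n_k, n_{k+1}, …, n_m with n_k + n_{k+1} + ⋯ + n_m = n, one has Σ_{k ≤ i < j ≤ m} (1/i − 1/j)·n_i·n_j ≤ (n²/4)·(1/k − 1/m). -/
open Finset

/-- Abel-type summation lemma. -/
private lemma abel_aux (g f : ℕ → ℝ) (k : ℕ) :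
    ∀ m, k ≤ m →
      ∑ t ∈ Finset.Ico k (m + 1), (g t - g (t + 1)) * ∑ i ∈ Finset.Icc k t, f i
        = ∑ i ∈ Finset.Icc k m, (g i - g (m + 1)) * f i := by
  intro m hm
  induction m, hm using Nat.le_induction with
  | base =>
      simp [Finset.sum_Ico_succ_top (le_refl k)]
  | succ m hm ih =>
      rw [Finset.sum_Ico_succ_top (by omega : k ≤ m + 1), ih,
        Finset.sum_Icc_succ_top (by omega : k ≤ m + 1),
        Finset.sum_Icc_succ_top (by omega : k ≤ m + 1)]
      have : ∑ i ∈ Finset.Icc k m, (g i - g (m + 1 + 1)) * f i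
          = ∑ i ∈ Finset.Icc k m, ((g i - g (m + 1)) * f i + (g (m + 1) - g (m + 1 + 1)) * f i) := by
        apply Finset.sum_congr rfl; intro i _; ring
      rw [this, Finset.sum_add_distrib, ← Finset.mul_sum]
      ring

/-- Key identity. -/
private lemma key_identity (g f : ℕ → ℝ) (k : ℕ) :
    ∀ m, k ≤ m →
      ∑ i ∈ Finset.Icc k m, ∑ j ∈ Finset.Ioc i m, (g i - g j) * f i * f j
        = ∑ t ∈ Finset.Ico k m, (g t - g (t + 1)) *
            (∑ i ∈ Finset.Icc k t, f i) * (∑ j ∈ Finset.Ioc t m, f j) := by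
  intro m hm
  induction m, hm using Nat.le_induction with
  | base => simp
  | succ m hm ih =>
      have hL : ∑ i ∈ Finset.Icc k (m + 1), ∑ j ∈ Finset.Ioc i (m + 1), (g i - g j) * f i * f j
          = (∑ i ∈ Finset.Icc k m, ∑ j ∈ Finset.Ioc i m, (g i - g j) * f i * f j)
            + ∑ i ∈ Finset.Icc k m, (g i - g (m + 1)) * f i * f (m + 1) := by
        rw [Finset.sum_Icc_succ_top (by omega : k ≤ m + 1)]
        simp only [Finset.Ioc_self, Finset.sum_empty, add_zero]
        rw [← Finset.sum_add_distrib]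
        apply Finset.sum_congr rfl
        intro i hi
        rw [Finset.sum_Ioc_succ_top (Finset.mem_Icc.mp hi).2]
      rw [hL, ih]
      have hR : ∑ t ∈ Finset.Ico k (m + 1), (g t - g (t + 1)) *
            (∑ i ∈ Finset.Icc k t, f i) * (∑ j ∈ Finset.Ioc t (m + 1), f j)
          = (∑ t ∈ Finset.Ico k m, (g t - g (t + 1)) *
              (∑ i ∈ Finset.Icc k t, f i) * (∑ j ∈ Finset.Ioc t m, f j))
            + f (m + 1) * ∑ t ∈ Finset.Ico k (m + 1), (g t - g (t + 1)) * ∑ i ∈ Finset.Icc k t, f i := by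
        have e1 : ∀ t ∈ Finset.Ico k (m + 1), (g t - g (t + 1)) *
              (∑ i ∈ Finset.Icc k t, f i) * (∑ j ∈ Finset.Ioc t (m + 1), f j)
            = (g t - g (t + 1)) * (∑ i ∈ Finset.Icc k t, f i) * (∑ j ∈ Finset.Ioc t m, f j)
              + f (m + 1) * ((g t - g (t + 1)) * ∑ i ∈ Finset.Icc k t, f i) := by
          intro t ht
          rw [Finset.sum_Ioc_succ_top (by
            have := (Finset.mem_Ico.mp ht).2; omega : t ≤ m)]
          ring
        rw [Finset.sum_congr rfl e1, Finset.sum_add_distrib, ← Finset.mul_sum,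
          Finset.sum_Ico_succ_top (by omega : k ≤ m)]
        simp only [Finset.Ioc_self, Finset.sum_empty, mul_zero, add_zero]
      rw [hR, abel_aux g f k m hm, Finset.mul_sum]
      congr 1
      apply Finset.sum_congr rfl
      intro i _
      ring

private lemma tel_aux (g : ℕ → ℝ) (k : ℕ) :
    ∀ m, k ≤ m → ∑ t ∈ Finset.Ico k m, (g t - g (t + 1)) = g k - g m := by
  intro m hm
  induction m, hm using Nat.le_induction with
  | base => simp
  | succ m hm ih => rw [Finset.sum_Ico_succ_top hm, ih]; ring

theorem stmt_8 {n k m : ℕ} (hk : 1 ≤ k) (hkm : k < m) (hmn : m + 1 ≤ n)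
    (f : ℕ → ℝ) (hf : ∀ i ∈ Finset.Icc k m, 0 ≤ f i)
    (hsum : ∑ i ∈ Finset.Icc k m, f i = n) :
    ∑ i ∈ Finset.Icc k m, ∑ j ∈ Finset.Ioc i m,
        (1 / (i : ℝ) - 1 / (j : ℝ)) * f i * f j
      ≤ (n : ℝ) ^ 2 / 4 * (1 / k - 1 / m) := by
  set g : ℕ → ℝ := fun t => 1 / (t : ℝ) with hg
  have hkm' : k ≤ m := hkm.le
  rw [key_identity g f k m hkm']
  have hbound : ∀ t ∈ Finset.Ico k m,
      (g t - g (t + 1)) * (∑ i ∈ Finset.Icc k t, f i) * (∑ j ∈ Finset.Ioc t m, f j)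
        ≤ (g t - g (t + 1)) * ((n : ℝ) ^ 2 / 4) := by
    intro t ht
    obtain ⟨ht1, ht2⟩ := Finset.mem_Ico.mp ht
    have htpos : (0 : ℝ) < t := by
      have : 1 ≤ t := le_trans hk ht1
      exact_mod_cast this
    have hc : 0 ≤ g t - g (t + 1) := by
      simp only [hg]
      rw [sub_nonneg]
      apply one_div_le_one_div_of_le htpos
      push_cast; linarith
    have hS : 0 ≤ ∑ i ∈ Finset.Icc k t, f i := by
      apply Finset.sum_nonneg
      intro i hi
      apply hf
      obtain ⟨h1, h2⟩ := Finset.mem_Icc.mp hi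
      exact Finset.mem_Icc.mpr ⟨h1, by omega⟩
    have hT : 0 ≤ ∑ j ∈ Finset.Ioc t m, f j := by
      apply Finset.sum_nonneg
      intro j hj
      apply hf
      obtain ⟨h1, h2⟩ := Finset.mem_Ioc.mp hj
      exact Finset.mem_Icc.mpr ⟨by omega, h2⟩
    have hST : (∑ i ∈ Finset.Icc k t, f i) + (∑ j ∈ Finset.Ioc t m, f j) = (n : ℝ) := by
      rw [← hsum]
      have h1 : Finset.Icc k t = Finset.Ioc (k - 1) t := by
        rw [← Finset.Icc_add_one_left_eq_Ioc]; congr 1; omega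
      have h2 : Finset.Icc k m = Finset.Ioc (k - 1) m := by
        rw [← Finset.Icc_add_one_left_eq_Ioc]; congr 1; omega
      rw [h1, h2, Finset.sum_Ioc_consecutive f (by omega) (by omega)]
    have hprod : (∑ i ∈ Finset.Icc k t, f i) * (∑ j ∈ Finset.Ioc t m, f j) ≤ (n : ℝ) ^ 2 / 4 := by
      nlinarith [sq_nonneg ((∑ i ∈ Finset.Icc k t, f i) - (∑ j ∈ Finset.Ioc t m, f j))]
    calc (g t - g (t + 1)) * (∑ i ∈ Finset.Icc k t, f i) * (∑ j ∈ Finset.Ioc t m, f j)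
        = (g t - g (t + 1)) * ((∑ i ∈ Finset.Icc k t, f i) * (∑ j ∈ Finset.Ioc t m, f j)) := by ring
      _ ≤ (g t - g (t + 1)) * ((n : ℝ) ^ 2 / 4) := mul_le_mul_of_nonneg_left hprod hc
  calc ∑ t ∈ Finset.Ico k m, (g t - g (t + 1)) *
          (∑ i ∈ Finset.Icc k t, f i) * (∑ j ∈ Finset.Ioc t m, f j)
      ≤ ∑ t ∈ Finset.Ico k m, (g t - g (t + 1)) * ((n : ℝ) ^ 2 / 4) :=
        Finset.sum_le_sum hbound
    _ = (∑ t ∈ Finset.Ico k m, (g t - g (t + 1))) * ((n : ℝ) ^ 2 / 4) := by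
        rw [← Finset.sum_mul]
    _ = (g k - g m) * ((n : ℝ) ^ 2 / 4) := by rw [tel_aux g k m hkm']
    _ = (n : ℝ) ^ 2 / 4 * (1 / k - 1 / m) := by simp only [hg]; ring
end

section
/- Let n and k be integers with 1 ≤ k ≤ n−2. The function γ̄₁ : ℝ^{\{k,…,n−2\}} → ℝ defined by γ̄₁(n_k, …, n_{n−2}) = n·Σ_{i=k}^{n−2} (1/i − 1/(n−1))·n_i − Σ_{i=k}^{n−2} (1/i − 1/(n−1))·n_i² − 2·Σ_{k ≤ i < j ≤ n−2} (1/j − 1/(n−1))·n_i·n_j is concave on all of ℝ^{\{k,…,n−2\}}. -/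
/-!
With `c i = 1/i - 1/(n-1)`, the function is a linear form minus the quadratic form
`Q z = ∑ c i * z i ^ 2 + 2 * ∑_{i<j} c j * z i * z j`, and `c` is nonnegative and
nonincreasing on `k, …, n-2`. Adjoining a new largest index `m` raises `Q` by
`c m * ((z m + S) ^ 2 - S ^ 2)`, `S` the sum of the other coordinates, and `c m` is at most every
earlier weight; induction then gives `c_min * (∑ z) ^ 2 ≤ Q z`, so `Q` is positive semidefinite,
hence convex, and the function is concave.
-/

open Finset

theorem LinearMap.BilinForm.convexOn_apply_self {𝕜 E : Type*} [Field 𝕜] [LinearOrder 𝕜]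
    [IsStrictOrderedRing 𝕜] [AddCommGroup E] [Module 𝕜 E] (B : LinearMap.BilinForm 𝕜 E)
    (hB : ∀ z, 0 ≤ B z z) : ConvexOn 𝕜 Set.univ fun x => B x x := by
  refine ⟨convex_univ, fun x _ y _ a b ha hb hab => ?_⟩
  have hgap : a * B x x + b * B y y - B (a • x + b • y) (a • x + b • y)
      = a * b * B (x - y) (x - y) := by
    simp only [map_add, map_sub, map_smul, LinearMap.add_apply, LinearMap.sub_apply,
      LinearMap.smul_apply, smul_eq_mul]
    linear_combination (-(a * B x x + b * B y y)) * hab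
  simp only [smul_eq_mul]
  linarith [mul_nonneg (mul_nonneg ha hb) (hB (x - y))]

section MaxWeightForm

variable {ι : Type*} [LinearOrder ι]

-- The form `∑ i, ∑ j, c (max i j) * z i * z j`, in the triangular shape of the statement.
def maxWeightForm (s : Finset ι) (c z : ι → ℝ) : ℝ :=
  ∑ i ∈ s, c i * z i ^ 2 + 2 * ∑ i ∈ s, ∑ j ∈ s, if i < j then c j * z i * z j else 0

theorem maxWeightForm_insert_of_forall_lt {s : Finset ι} {m : ι} (hm : ∀ i ∈ s, i < m)
    (c z : ι → ℝ) :
    maxWeightForm (insert m s) c z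
      = maxWeightForm s c z + c m * (z m ^ 2 + 2 * z m * ∑ i ∈ s, z i) := by
  have hms : m ∉ s := fun h => lt_irrefl m (hm m h)
  have hrow : ∀ i ∈ s, (∑ j ∈ insert m s, if i < j then c j * z i * z j else 0)
      = c m * z i * z m + ∑ j ∈ s, if i < j then c j * z i * z j else 0 := fun i hi => by
    rw [sum_insert hms, if_pos (hm i hi)]
  have hlast : (∑ j ∈ insert m s, if m < j then c j * z m * z j else 0) = 0 :=
    sum_eq_zero fun j hj => if_neg <| not_lt.2 <| by
      rcases mem_insert.1 hj with rfl | hj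
      exacts [le_rfl, (hm j hj).le]
  have hcross : ∑ i ∈ s, c m * z i * z m = c m * z m * ∑ i ∈ s, z i := by
    rw [mul_sum]; exact sum_congr rfl fun _ _ => by ring
  rw [maxWeightForm, maxWeightForm, sum_insert hms, sum_insert hms, hlast, sum_congr rfl hrow,
    sum_add_distrib, hcross]
  ring

theorem mul_sq_sum_le_maxWeightForm {c : ι → ℝ} (hc : Antitone c) (s : Finset ι) (z : ι → ℝ)
    {b : ℝ} (hb : 0 ≤ b) (hbc : ∀ i ∈ s, b ≤ c i) :
    b * (∑ i ∈ s, z i) ^ 2 ≤ maxWeightForm s c z := by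
  induction s using Finset.induction_on_max generalizing b with
  | empty => simp [maxWeightForm]
  | insert m s hm ih =>
    have hms : m ∉ s := fun h => lt_irrefl m (hm m h)
    have hcm : b ≤ c m := hbc m (mem_insert_self m s)
    have ih' := ih (hb.trans hcm) fun i hi => hc (hm i hi).le
    rw [maxWeightForm_insert_of_forall_lt hm, sum_insert hms]
    linarith [mul_le_mul_of_nonneg_right hcm (sq_nonneg (z m + ∑ i ∈ s, z i))]

theorem maxWeightForm_nonneg {c : ι → ℝ} (hc : Antitone c) {s : Finset ι}
    (hc0 : ∀ i ∈ s, 0 ≤ c i) (z : ι → ℝ) : 0 ≤ maxWeightForm s c z := by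
  simpa using mul_sq_sum_le_maxWeightForm hc s z le_rfl hc0

variable [Fintype ι]

theorem maxWeightForm_univ_eq_toLinearMap₂' (c z : ι → ℝ) :
    maxWeightForm univ c z = Matrix.toLinearMap₂' ℝ
      (Matrix.diagonal c + 2 • Matrix.of fun i j => if i < j then c j else 0) z z := by
  simp only [Matrix.toLinearMap₂'_apply, maxWeightForm, Matrix.add_apply, Matrix.smul_apply,
    Matrix.diagonal_apply, Matrix.of_apply, smul_eq_mul, mul_add, sum_add_distrib, mul_ite,
    mul_zero, sum_ite_eq, mem_univ, if_true, mul_sum]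
  congr 1
  · exact sum_congr rfl fun i _ => by ring
  · exact sum_congr rfl fun i _ => sum_congr rfl fun j _ => by split_ifs <;> ring

theorem convexOn_maxWeightForm {c : ι → ℝ} (hc : Antitone c) (hc0 : ∀ i, 0 ≤ c i) :
    ConvexOn ℝ Set.univ (maxWeightForm univ c) := by
  simp only [funext (maxWeightForm_univ_eq_toLinearMap₂' c)]
  exact LinearMap.BilinForm.convexOn_apply_self _ fun z =>
    maxWeightForm_univ_eq_toLinearMap₂' c z ▸ maxWeightForm_nonneg hc (fun i _ => hc0 i) z

end MaxWeightForm

theorem stmt_10_general {n k : ℕ} (hk : 1 ≤ k) :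
    ConcaveOn ℝ Set.univ
      (fun x : { i // i ∈ Finset.Icc k (n - 2) } → ℝ =>
        (n : ℝ) * ∑ i : { i // i ∈ Finset.Icc k (n - 2) },
            (1 / ((i : ℕ) : ℝ) - 1 / ((n : ℝ) - 1)) * x i
        - ∑ i : { i // i ∈ Finset.Icc k (n - 2) },
            (1 / ((i : ℕ) : ℝ) - 1 / ((n : ℝ) - 1)) * (x i) ^ 2
        - 2 * ∑ i : { i // i ∈ Finset.Icc k (n - 2) },
            ∑ j : { i // i ∈ Finset.Icc k (n - 2) },
              if (i : ℕ) < (j : ℕ) then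
                (1 / ((j : ℕ) : ℝ) - 1 / ((n : ℝ) - 1)) * x i * x j
              else 0) := by
  set c : { i // i ∈ Icc k (n - 2) } → ℝ := fun i => 1 / ((i : ℕ) : ℝ) - 1 / ((n : ℝ) - 1)
  have hbounds : ∀ i : { i // i ∈ Icc k (n - 2) }, 1 ≤ (i : ℕ) ∧ (i : ℕ) + 1 ≤ n := fun i => by
    have := mem_Icc.1 i.2
    omega
  have hpos : ∀ i : { i // i ∈ Icc k (n - 2) }, (0 : ℝ) < (i : ℕ) := fun i => by
    exact_mod_cast (hbounds i).1
  have hc : Antitone c := fun i j hij => by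
    have : ((i : ℕ) : ℝ) ≤ (j : ℕ) := by exact_mod_cast hij
    simp only [c]; gcongr; exact hpos i
  have hc0 : ∀ i, 0 ≤ c i := fun i => by
    have : ((i : ℕ) : ℝ) ≤ (n : ℝ) - 1 := by
      rw [le_sub_iff_add_le]; exact_mod_cast (hbounds i).2
    simp only [c, sub_nonneg]; gcongr; exact hpos i
  have hlin := LinearMap.concaveOn ((n : ℝ) • ∑ i, c i • LinearMap.proj (R := ℝ)
    (φ := fun _ : { i // i ∈ Icc k (n - 2) } => ℝ) i) convex_univ
  refine (hlin.sub (convexOn_maxWeightForm hc hc0)).congr fun x _ => ?_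
  simp only [Pi.sub_apply, LinearMap.smul_apply, LinearMap.coe_sum, Finset.sum_apply,
    LinearMap.coe_proj, Function.eval, smul_eq_mul, maxWeightForm, Subtype.coe_lt_coe, c, mul_sum]
  ring

theorem stmt_10 {n k : ℕ} (hk : 1 ≤ k) (hkn : k + 2 ≤ n) :
    ConcaveOn ℝ Set.univ
      (fun x : { i // i ∈ Finset.Icc k (n - 2) } → ℝ =>
        (n : ℝ) * ∑ i : { i // i ∈ Finset.Icc k (n - 2) },
            (1 / ((i : ℕ) : ℝ) - 1 / ((n : ℝ) - 1)) * x i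
        - ∑ i : { i // i ∈ Finset.Icc k (n - 2) },
            (1 / ((i : ℕ) : ℝ) - 1 / ((n : ℝ) - 1)) * (x i) ^ 2
        - 2 * ∑ i : { i // i ∈ Finset.Icc k (n - 2) },
            ∑ j : { i // i ∈ Finset.Icc k (n - 2) },
              if (i : ℕ) < (j : ℕ) then
                (1 / ((j : ℕ) : ℝ) - 1 / ((n : ℝ) - 1)) * x i * x j
              else 0) :=
  stmt_10_general hk
end

section
/- Let n, k, j be integers with k ≥ 1, j ≥ 1 and k + j − 1 < n − 1. Let A be the j × j real matrix whose (s, t) entry is 1/(k + max(s, t) − 1) − 1/(n−1) for 1 ≤ s, t ≤ j. Then det A = (∏_{t=1}^{j−1} (1/(k+t−1) − 1/(k+t))) · (1/(k+j−1) − 1/(n−1)); in particular (−1)^j · det(−2A) = 2^j · (∏_{t=1}^{j−1} (1/(k+t−1) − 1/(k+t))) · (1/(k+j−1) − 1/(n−1)) > 0. -/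
open Finset

lemma aux_det (x : ℝ) : ∀ (j k : ℕ) (A : Matrix (Fin (j+1)) (Fin (j+1)) ℝ),
    (∀ s t : Fin (j+1), A s t = 1 / ((k : ℝ) + (max (s : ℕ) (t : ℕ) : ℕ)) - x) →
    A.det = (∏ t ∈ Finset.range j, (1 / ((k : ℝ) + t) - 1 / ((k : ℝ) + t + 1))) *
      (1 / ((k : ℝ) + j) - x) := by
  intro j
  induction j with
  | zero =>
      intro k A hA
      rw [Matrix.det_fin_one, hA]
      simp
  | succ j ih =>
      intro k A hA
      have h10 : (1 : Fin (j+2)) ≠ 0 := by simp [Fin.ext_iff]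
      rw [← Matrix.det_updateRow_add_smul_self A h10.symm (-1 : ℝ)]
      rw [Matrix.det_succ_row_zero]
      rw [Finset.sum_eq_single 0]
      · have hsub : ∀ s t : Fin (j+1),
            ((Matrix.updateRow A 0 (A 0 + (-1 : ℝ) • A 1)).submatrix Fin.succ
              (Fin.succAbove 0)) s t
              = 1 / (((k+1 : ℕ) : ℝ) + (max (s : ℕ) (t : ℕ) : ℕ)) - x := by
          intro s t
          rw [Fin.succAbove_zero]
          simp only [Matrix.submatrix_apply, Matrix.updateRow_ne (Fin.succ_ne_zero s)]
          rw [hA]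
          have : max ((Fin.succ s : Fin (j+2)) : ℕ) ((Fin.succ t : Fin (j+2)) : ℕ)
              = max (s : ℕ) (t : ℕ) + 1 := by
            simp [Fin.val_succ, Nat.succ_max_succ]
          rw [this]
          push_cast
          ring_nf
        rw [ih (k+1) _ hsub]
        have hd : Matrix.updateRow A 0 (A 0 + (-1 : ℝ) • A 1) 0 0
            = 1 / (k : ℝ) - 1 / ((k : ℝ) + 1) := by
          rw [Matrix.updateRow_self]
          simp only [Pi.add_apply, Pi.smul_apply, smul_eq_mul, neg_one_mul]
          rw [hA, hA]
          have h1 : ((1 : Fin (j+2)) : ℕ) = 1 := rfl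
          have h0 : ((0 : Fin (j+2)) : ℕ) = 0 := rfl
          rw [h0, h1]
          norm_num
        rw [hd]
        rw [Finset.prod_range_succ']
        have hP : (∏ t ∈ Finset.range j, (1 / (((k+1:ℕ):ℝ) + t) - 1 / (((k+1:ℕ):ℝ) + t + 1)))
            = ∏ t ∈ Finset.range j,
                (1 / ((k:ℝ) + (((t+1):ℕ):ℝ)) - 1 / ((k:ℝ) + (((t+1):ℕ):ℝ) + 1)) := by
          refine Finset.prod_congr rfl fun t _ => ?_
          push_cast; ring_nf
        rw [hP]
        generalize (∏ t ∈ Finset.range j,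
            (1 / ((k:ℝ) + (((t+1):ℕ):ℝ)) - 1 / ((k:ℝ) + (((t+1):ℕ):ℝ) + 1))) = Q
        simp only [Fin.val_zero, pow_zero, one_mul, Nat.cast_zero, add_zero]
        push_cast
        ring
      · intro t _ ht
        have hrow : Matrix.updateRow A 0 (A 0 + (-1 : ℝ) • A 1) 0 t = 0 := by
          rw [Matrix.updateRow_self]
          simp only [Pi.add_apply, Pi.smul_apply, smul_eq_mul, neg_one_mul]
          rw [hA, hA]
          have h1 : ((1 : Fin (j+2)) : ℕ) = 1 := rfl
          have h0 : ((0 : Fin (j+2)) : ℕ) = 0 := rfl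
          have htv : 1 ≤ (t : ℕ) := by
            rcases Nat.pos_of_ne_zero (fun h => ht (Fin.ext h)) with h
            exact h
          rw [h0, h1, Nat.max_eq_right (Nat.zero_le _), Nat.max_eq_right htv]
          ring
        rw [hrow]; ring
      · intro h; exact absurd (Finset.mem_univ 0) h

theorem stmt_11 {n k j : ℕ} (hk : 1 ≤ k) (hj : 1 ≤ j) (hjn : k + j < n)
    (A : Matrix (Fin j) (Fin j) ℝ)
    (hA : ∀ s t : Fin j,
      A s t = 1 / ((k : ℝ) + (max (s : ℕ) (t : ℕ) : ℕ)) - 1 / ((n : ℝ) - 1)) :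
    A.det = (∏ t ∈ Finset.range (j - 1),
        (1 / ((k : ℝ) + t) - 1 / ((k : ℝ) + t + 1))) *
      (1 / ((k : ℝ) + (j : ℝ) - 1) - 1 / ((n : ℝ) - 1)) ∧
    (-1 : ℝ) ^ j * ((-2 : ℝ) • A).det
      = 2 ^ j * ((∏ t ∈ Finset.range (j - 1),
          (1 / ((k : ℝ) + t) - 1 / ((k : ℝ) + t + 1))) *
        (1 / ((k : ℝ) + (j : ℝ) - 1) - 1 / ((n : ℝ) - 1))) ∧
    0 < (-1 : ℝ) ^ j * ((-2 : ℝ) • A).det := by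
  obtain ⟨m, rfl⟩ : ∃ m, j = m + 1 := ⟨j - 1, (Nat.succ_pred_eq_of_pos hj).symm⟩
  have hd : A.det = (∏ t ∈ Finset.range m,
      (1 / ((k : ℝ) + t) - 1 / ((k : ℝ) + t + 1))) *
      (1 / ((k : ℝ) + m) - 1 / ((n : ℝ) - 1)) :=
    aux_det (1 / ((n : ℝ) - 1)) m k A hA
  have hkm : (k : ℝ) + (m + 1 : ℕ) - 1 = (k : ℝ) + m := by push_cast; ring
  have hrange : (m + 1) - 1 = m := rfl
  have hdet' : A.det = (∏ t ∈ Finset.range ((m+1) - 1),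
      (1 / ((k : ℝ) + t) - 1 / ((k : ℝ) + t + 1))) *
      (1 / ((k : ℝ) + ((m+1 : ℕ) : ℝ) - 1) - 1 / ((n : ℝ) - 1)) := by
    rw [hrange]
    push_cast
    rw [show (k : ℝ) + (m + 1) - 1 = (k : ℝ) + m by ring]
    exact hd
  have hpos : 0 < A.det := by
    rw [hd]
    apply mul_pos
    · apply Finset.prod_pos
      intro t _
      have h1 : (0 : ℝ) < (k : ℝ) + t := by
        have : (1 : ℝ) ≤ (k : ℝ) := by exact_mod_cast hk
        positivity
      have h2 : (k : ℝ) + t < (k : ℝ) + t + 1 := by linarith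
      have := one_div_lt_one_div_of_lt h1 h2
      linarith
    · have h1 : (0 : ℝ) < (k : ℝ) + m := by
        have : (1 : ℝ) ≤ (k : ℝ) := by exact_mod_cast hk
        positivity
      have h2 : (k : ℝ) + m < (n : ℝ) - 1 := by
        have : ((k + (m+1) : ℕ) : ℝ) < (n : ℕ) := by exact_mod_cast hjn
        push_cast at this
        linarith
      have := one_div_lt_one_div_of_lt h1 h2
      linarith
  have hsmul : ((-2 : ℝ) • A).det = (-2 : ℝ) ^ (m+1) * A.det := by
    rw [Matrix.det_smul]
    simp
  have hsign : (-1 : ℝ) ^ (m+1) * (-2 : ℝ) ^ (m+1) = 2 ^ (m+1) := by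
    rw [← mul_pow]; norm_num
  refine ⟨hdet', ?_, ?_⟩
  · rw [hsmul, ← hdet', ← mul_assoc, hsign]
  · rw [hsmul, ← mul_assoc, hsign]
    positivity
end

section
/- Let n, k, m be integers with 1 ≤ k ≤ n/2 and n−k ≤ m ≤ n−2. Let G be a simple graph on n vertices whose vertex set is partitioned into a set A of size k and a set B of size n−k such that B is an independent set, every vertex of B is adjacent to every vertex of A, and the subgraph induced on A is (k+m−n)-regular. Then every vertex of A has degree m, every vertex of B has degree k, and R'(G) = n/2 − (1/2)·(1/k − 1/m)·k·(n−k). -/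
open scoped Classical

theorem stmt_16 {n k m : ℕ} (hk : 1 ≤ k) (hkn : 2 * k ≤ n)
    (hnm : n - k ≤ m) (hmn : m + 2 ≤ n)
    {V : Type*} [Fintype V] (G : SimpleGraph V)
    (hcard : Fintype.card V = n)
    (A B : Finset V) (hdisj : Disjoint A B) (hunion : A ∪ B = Finset.univ)
    (hA : A.card = k) (hB : B.card = n - k)
    (hBindep : ∀ u ∈ B, ∀ v ∈ B, ¬ G.Adj u v)
    (hBA : ∀ u ∈ B, ∀ v ∈ A, G.Adj u v)
    (hAreg : ∀ v ∈ A, (A.filter fun w => G.Adj v w).card = k + m - n) :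
    (∀ v ∈ A, G.degree v = m) ∧ (∀ v ∈ B, G.degree v = k) ∧
    Rvar G = (n : ℝ) / 2 - (1 / 2) * (1 / k - 1 / m) * k * (n - k) := by
  classical
  have hkm : k ≤ m := by omega
  have hm1 : 1 ≤ m := le_trans hk hkm
  have hmem : ∀ v : V, v ∈ A ∨ v ∈ B := by
    intro v
    have : v ∈ A ∪ B := by rw [hunion]; exact Finset.mem_univ v
    simpa [Finset.mem_union] using this
  have hdegA : ∀ v ∈ A, G.degree v = m := by
    intro v hv
    have hset : G.neighborFinset v = (A.filter fun w => G.Adj v w) ∪ B := by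
      ext w
      simp only [SimpleGraph.mem_neighborFinset, Finset.mem_union, Finset.mem_filter]
      constructor
      · intro h
        rcases hmem w with hw | hw
        · exact Or.inl ⟨hw, h⟩
        · exact Or.inr hw
      · rintro (⟨_, h⟩ | hw)
        · exact h
        · exact (hBA w hw v hv).symm
    have hdisj2 : Disjoint (A.filter fun w => G.Adj v w) B :=
      hdisj.mono_left (Finset.filter_subset _ _)
    rw [SimpleGraph.degree, hset, Finset.card_union_of_disjoint hdisj2, hAreg v hv, hB]
    omega
  have hdegB : ∀ v ∈ B, G.degree v = k := by
    intro v hv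
    have hset : G.neighborFinset v = A := by
      ext w
      simp only [SimpleGraph.mem_neighborFinset]
      constructor
      · intro h
        rcases hmem w with hw | hw
        · exact hw
        · exact absurd h (hBindep v hv w hw)
      · intro hw
        exact hBA v hv w hw
    rw [SimpleGraph.degree, hset, hA]
  refine ⟨hdegA, hdegB, ?_⟩
  have hedge : ∀ e ∈ G.edgeFinset,
      Sym2.lift ⟨fun u v => (1 : ℝ) / (max (G.degree u) (G.degree v) : ℕ),
        fun u v => by dsimp only; rw [max_comm]⟩ e = 1 / (m : ℝ) := by
    intro e he
    induction e using Sym2.ind with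
    | _ u v =>
      rw [SimpleGraph.mem_edgeFinset, SimpleGraph.mem_edgeSet] at he
      have hmax : max (G.degree u) (G.degree v) = m := by
        rcases hmem u with hu | hu <;> rcases hmem v with hv | hv
        · rw [hdegA u hu, hdegA v hv, max_self]
        · rw [hdegA u hu, hdegB v hv]; omega
        · rw [hdegB u hu, hdegA v hv]; omega
        · exact absurd he (hBindep u hu v hv)
      simp only [Sym2.lift_mk]
      rw [hmax]
  have hsum : Rvar G = G.edgeFinset.card * (1 / (m : ℝ)) := by
    rw [Rvar, Finset.sum_congr rfl hedge, Finset.sum_const, nsmul_eq_mul]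
  have hcount : 2 * G.edgeFinset.card = k * m + (n - k) * k := by
    have h := SimpleGraph.sum_degrees_eq_twice_card_edges G
    rw [← hunion, Finset.sum_union hdisj, Finset.sum_congr rfl hdegA,
      Finset.sum_congr rfl hdegB, Finset.sum_const, Finset.sum_const,
      smul_eq_mul, smul_eq_mul, hA, hB] at h
    omega
  have hknR : ((n - k : ℕ) : ℝ) = (n : ℝ) - k := by
    have : k ≤ n := by omega
    push_cast [this]
    ring
  have hE : (G.edgeFinset.card : ℝ) * 2 = k * m + ((n : ℝ) - k) * k := by
    have := congrArg (Nat.cast : ℕ → ℝ) hcount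
    push_cast [hknR] at this
    linarith
  rw [hsum]
  have hm0 : (m : ℝ) ≠ 0 := by positivity
  have hk0 : (k : ℝ) ≠ 0 := by positivity
  have hEc : (G.edgeFinset.card : ℝ) = ((k : ℝ) * m + ((n : ℝ) - k) * k) / 2 := by
    linarith
  rw [hEc]
  field_simp
  ring
end

section
/- Let n, k, m be integers with 1 ≤ k < m < n−1. For all nonnegative real numbers n_k, …, n_m with n_k + ⋯ + n_m = n, one has Σ_{k ≤ i < j ≤ m} (1/i − 1/j)·n_i·n_j ≤ (n²/4)·(1/k − 1/m) < (n²/4)·(1/k − 1/(n−1)); consequently, allowing the index to range up to n−1 but forcing n_j = 0 for m < j ≤ n−1 gives a strictly smaller maximum value of the quadratic form than the unconstrained maximum (n²/4)·(1/k − 1/(n−1)). -/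
/-- Telescoping sum of `1/t - 1/(t+1)` over `Ico a b`. -/
lemma tele_aux (a : ℕ) : ∀ b : ℕ, a ≤ b →
    ∑ t ∈ Finset.Ico a b, (1 / (t : ℝ) - 1 / ((t : ℝ) + 1)) = 1 / (a : ℝ) - 1 / (b : ℝ) := by
  intro b
  induction b with
  | zero => intro h; interval_cases a; simp
  | succ b ih =>
    intro h
    rcases Nat.lt_or_ge a (b + 1) with h' | h'
    · have hab : a ≤ b := by omega
      rw [Finset.sum_Ico_succ_top hab, ih hab]
      push_cast
      ring
    · have : a = b + 1 := by omega
      subst this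
      simp

theorem stmt_18 {n k m : ℕ} (hk : 1 ≤ k) (hkm : k < m) (hmn : m + 1 < n)
    (f : ℕ → ℝ) (hf : ∀ i ∈ Finset.Icc k m, 0 ≤ f i)
    (hsum : ∑ i ∈ Finset.Icc k m, f i = n) :
    ∑ i ∈ Finset.Icc k m, ∑ j ∈ Finset.Ioc i m,
        (1 / (i : ℝ) - 1 / (j : ℝ)) * f i * f j
      ≤ (n : ℝ) ^ 2 / 4 * (1 / k - 1 / m) ∧
    (n : ℝ) ^ 2 / 4 * (1 / k - 1 / m)
      < (n : ℝ) ^ 2 / 4 * (1 / k - 1 / ((n : ℝ) - 1)) := by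
  have hn4 : (0 : ℝ) < (n : ℝ) ^ 2 / 4 := by
    have : (4 : ℕ) ≤ n := by omega
    have : (4 : ℝ) ≤ (n : ℝ) := by exact_mod_cast this
    nlinarith
  constructor
  · -- main inequality
    have key : (∑ i ∈ Finset.Icc k m, ∑ j ∈ Finset.Ioc i m,
          (1 / (i : ℝ) - 1 / (j : ℝ)) * f i * f j)
        = ∑ t ∈ Finset.Ico k m, (1 / (t : ℝ) - 1 / ((t : ℝ) + 1)) *
            ((∑ i ∈ Finset.Icc k t, f i) * (∑ j ∈ Finset.Ioc t m, f j)) := by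
      -- Step 1: rewrite each summand as a sum over t with an if
      have step1 : (∑ i ∈ Finset.Icc k m, ∑ j ∈ Finset.Ioc i m,
            (1 / (i : ℝ) - 1 / (j : ℝ)) * f i * f j)
          = ∑ i ∈ Finset.Icc k m, ∑ j ∈ Finset.Icc k m, ∑ t ∈ Finset.Ico k m,
              (if i ≤ t ∧ t < j then (1 / (t : ℝ) - 1 / ((t : ℝ) + 1)) * (f i * f j)
               else 0) := by
        apply Finset.sum_congr rfl
        intro i hi
        simp only [Finset.mem_Icc] at hi
        have inner : ∀ j ∈ Finset.Ioc i m,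
            (1 / (i : ℝ) - 1 / (j : ℝ)) * f i * f j
            = ∑ t ∈ Finset.Ico k m,
              (if i ≤ t ∧ t < j then (1 / (t : ℝ) - 1 / ((t : ℝ) + 1)) * (f i * f j)
               else 0) := by
          intro j hj
          simp only [Finset.mem_Ioc] at hj
          have hfilter : Finset.filter (fun t => i ≤ t ∧ t < j) (Finset.Ico k m)
              = Finset.Ico i j := by
            ext t
            simp only [Finset.mem_filter, Finset.mem_Ico]
            omega
          rw [← Finset.sum_filter, hfilter, ← Finset.sum_mul,
            tele_aux i j (le_of_lt hj.1), mul_assoc]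
        rw [Finset.sum_congr rfl inner]
        apply Finset.sum_subset
        · intro j hj
          simp only [Finset.mem_Ioc] at hj
          simp only [Finset.mem_Icc]
          omega
        · intro j hj hj'
          simp only [Finset.mem_Icc] at hj
          simp only [Finset.mem_Ioc, not_and, not_le] at hj'
          apply Finset.sum_eq_zero
          intro t _
          rw [if_neg]
          omega
      rw [step1]
      -- Step 2: exchange sums so t is outermost
      rw [Finset.sum_congr rfl (fun i _ => Finset.sum_comm), Finset.sum_comm]
      -- Step 3: factor the inner double sum
      apply Finset.sum_congr rfl
      intro t ht
      simp only [Finset.mem_Ico] at ht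
      have : ∀ i ∈ Finset.Icc k m, ∀ j ∈ Finset.Icc k m,
          (if i ≤ t ∧ t < j then (1 / (t : ℝ) - 1 / ((t : ℝ) + 1)) * (f i * f j) else 0)
          = (1 / (t : ℝ) - 1 / ((t : ℝ) + 1)) *
              ((if i ≤ t then f i else 0) * (if t < j then f j else 0)) := by
        intro i _ j _
        by_cases h1 : i ≤ t <;> by_cases h2 : t < j <;> simp [h1, h2]
      calc ∑ i ∈ Finset.Icc k m, ∑ j ∈ Finset.Icc k m,
              (if i ≤ t ∧ t < j then (1 / (t : ℝ) - 1 / ((t : ℝ) + 1)) * (f i * f j) else 0)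
          = ∑ i ∈ Finset.Icc k m, ∑ j ∈ Finset.Icc k m,
              (1 / (t : ℝ) - 1 / ((t : ℝ) + 1)) *
                ((if i ≤ t then f i else 0) * (if t < j then f j else 0)) :=
            Finset.sum_congr rfl fun i hi =>
              Finset.sum_congr rfl fun j hj => this i hi j hj
        _ = ∑ i ∈ Finset.Icc k m, (1 / (t : ℝ) - 1 / ((t : ℝ) + 1)) *
              ((if i ≤ t then f i else 0) *
               (∑ j ∈ Finset.Icc k m, if t < j then f j else 0)) := by
            apply Finset.sum_congr rfl
            intro i _
            rw [← Finset.mul_sum, ← Finset.mul_sum]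
        _ = (1 / (t : ℝ) - 1 / ((t : ℝ) + 1)) *
              ((∑ i ∈ Finset.Icc k m, if i ≤ t then f i else 0) *
               (∑ j ∈ Finset.Icc k m, if t < j then f j else 0)) := by
            rw [← Finset.mul_sum, ← Finset.sum_mul]
        _ = (1 / (t : ℝ) - 1 / ((t : ℝ) + 1)) *
              ((∑ i ∈ Finset.Icc k t, f i) * (∑ j ∈ Finset.Ioc t m, f j)) := by
            congr 2
            · rw [← Finset.sum_filter]
              congr 1
              ext i
              simp only [Finset.mem_filter, Finset.mem_Icc]
              omega
            · rw [← Finset.sum_filter]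
              congr 1
              ext j
              simp only [Finset.mem_filter, Finset.mem_Icc, Finset.mem_Ioc]
              omega
    rw [key]
    have bound : ∀ t ∈ Finset.Ico k m,
        (1 / (t : ℝ) - 1 / ((t : ℝ) + 1)) *
            ((∑ i ∈ Finset.Icc k t, f i) * (∑ j ∈ Finset.Ioc t m, f j))
        ≤ (1 / (t : ℝ) - 1 / ((t : ℝ) + 1)) * ((n : ℝ) ^ 2 / 4) := by
      intro t ht
      simp only [Finset.mem_Ico] at ht
      have htp : (1 : ℝ) ≤ (t : ℝ) := by exact_mod_cast (by omega : 1 ≤ t)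
      have hg : 0 ≤ 1 / (t : ℝ) - 1 / ((t : ℝ) + 1) := by
        rw [sub_nonneg]
        apply one_div_le_one_div_of_le <;> linarith
      apply mul_le_mul_of_nonneg_left _ hg
      -- A * B ≤ n^2/4 with A + B = n, A,B ≥ 0
      set A := ∑ i ∈ Finset.Icc k t, f i with hA
      set B := ∑ j ∈ Finset.Ioc t m, f j with hB
      have hsplit : A + B = (n : ℝ) := by
        rw [hA, hB, ← Finset.sum_union]
        · rw [show Finset.Icc k t ∪ Finset.Ioc t m = Finset.Icc k m by
            ext x; simp only [Finset.mem_union, Finset.mem_Icc, Finset.mem_Ioc]; omega]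
          exact hsum
        · rw [Finset.disjoint_left]
          intro x hx hx'
          simp only [Finset.mem_Icc] at hx
          simp only [Finset.mem_Ioc] at hx'
          omega
      nlinarith [sq_nonneg (A - B)]
    calc ∑ t ∈ Finset.Ico k m, (1 / (t : ℝ) - 1 / ((t : ℝ) + 1)) *
            ((∑ i ∈ Finset.Icc k t, f i) * (∑ j ∈ Finset.Ioc t m, f j))
        ≤ ∑ t ∈ Finset.Ico k m, (1 / (t : ℝ) - 1 / ((t : ℝ) + 1)) * ((n : ℝ) ^ 2 / 4) :=
          Finset.sum_le_sum bound
      _ = (n : ℝ) ^ 2 / 4 * (1 / k - 1 / m) := by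
          rw [← Finset.sum_mul, tele_aux k m (le_of_lt hkm)]
          ring
  · -- strict inequality
    have hm0 : (0 : ℝ) < (m : ℝ) := by exact_mod_cast (by omega : 0 < m)
    have hmn' : (m : ℝ) < (n : ℝ) - 1 := by
      have : (m : ℝ) + 1 < (n : ℝ) := by exact_mod_cast hmn
      linarith
    have h1 : 1 / ((n : ℝ) - 1) < 1 / (m : ℝ) := one_div_lt_one_div_of_lt hm0 hmn'
    apply mul_lt_mul_of_pos_left _ hn4
    linarith
end
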